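/- Let q > 1, α ≥ 0 with q > α + 1, and let w(x) = |1 - |x||^α on ℝⁿ. Then for any point x₀ with |x₀| = 1 and radius 0 < r < 1, the weighted measure of the ball satisfies w(B(x₀,r)) := ∫_{B(x₀,r)} w(y) dy ≍ r^{n+α}, i.e. there are constants 0 < c ≤ C (depending only on n, α) with c r^{n+α} ≤ w(B(x₀,r)) ≤ C r^{n+α}. -/

import Mathlib

open MeasureTheory Metric

/-- For `q > α + 1`, `α ≥ 0`, the power weight `w(x) = |1-|x||^α` satisfies
`w(B(x₀,r)) ≍ r^{n+α}` for balls centered on the unit sphere with radius `r < 1`. -/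
theorem stmt6 (n : ℕ) (hn : 1 ≤ n) (q α : ℝ) (hq : 1 < q) (hα : 0 ≤ α) (h : α + 1 < q) :
    ∃ c C : ℝ, 0 < c ∧ c ≤ C ∧
      ∀ (x₀ : EuclideanSpace ℝ (Fin n)) (r : ℝ), ‖x₀‖ = 1 → 0 < r → r < 1 →
        c * r ^ ((n:ℝ) + α) ≤ (∫ y in ball x₀ r, |1 - ‖y‖| ^ α) ∧
          (∫ y in ball x₀ r, |1 - ‖y‖| ^ α) ≤ C * r ^ ((n:ℝ) + α) := by
  set E := EuclideanSpace ℝ (Fin n)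
  have hfr : Module.finrank ℝ E = n := finrank_euclideanSpace_fin
  haveI : Nontrivial E := Module.nontrivial_of_finrank_pos (R := ℝ) (by rw [hfr]; exact hn)
  set κ : ℝ := (volume (ball (0:E) 1)).toReal with hκ
  have hκpos : 0 < κ := by
    apply ENNReal.toReal_pos (measure_ball_pos volume _ one_pos).ne' measure_ball_lt_top.ne
  have hvol : ∀ (x : E) (s : ℝ), 0 ≤ s → (volume (ball x s)).toReal = s ^ n * κ := by
    intro x s hs
    rw [Measure.addHaar_ball volume x hs, hfr, ENNReal.toReal_mul, ENNReal.toReal_ofReal (by positivity)]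
  have hnα : (0:ℝ) ≤ (n:ℝ) + α := by positivity
  refine ⟨κ * (1/4) ^ ((n:ℝ) + α), κ, by positivity, ?_, ?_⟩
  · nth_rewrite 2 [← mul_one κ]
    exact mul_le_mul_of_nonneg_left (Real.rpow_le_one (by norm_num) (by norm_num) hnα) hκpos.le
  intro x₀ r hx₀ hr hr1
  set f : E → ℝ := fun y => |1 - ‖y‖| ^ α with hf
  have hfmeas : AEStronglyMeasurable f volume :=
    ((measurable_const.sub measurable_norm).abs.pow_const α).aestronglyMeasurable
  have hfnonneg : ∀ y, 0 ≤ f y := fun y => Real.rpow_nonneg (abs_nonneg _) α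
  have hub : ∀ y ∈ ball x₀ r, f y ≤ r ^ α := by
    intro y hy
    have h1 : |1 - ‖y‖| ≤ r := by
      rw [← hx₀]
      calc |‖x₀‖ - ‖y‖| ≤ ‖x₀ - y‖ := abs_norm_sub_norm_le _ _
        _ ≤ r := le_of_lt (by rwa [← dist_eq_norm, dist_comm, ← mem_ball])
    exact Real.rpow_le_rpow (abs_nonneg _) h1 hα
  have hint : IntegrableOn f (ball x₀ r) volume := by
    apply Measure.integrableOn_of_bounded measure_ball_lt_top.ne hfmeas (M := r ^ α)
    filter_upwards [ae_restrict_mem measurableSet_ball] with y hy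
    rw [Real.norm_eq_abs, abs_of_nonneg (hfnonneg y)]
    exact hub y hy
  constructor
  · -- lower bound
    set x₁ : E := (1 + r/2) • x₀ with hx₁
    have hx₁norm : ‖x₁‖ = 1 + r/2 := by
      rw [hx₁, norm_smul, hx₀, mul_one, Real.norm_eq_abs, abs_of_pos (by linarith)]
    have hsub : ball x₁ (r/4) ⊆ ball x₀ r := by
      intro y hy
      rw [mem_ball] at hy ⊢
      have hd : dist x₁ x₀ = r/2 := by
        rw [dist_eq_norm, hx₁]
        have : (1 + r/2) • x₀ - x₀ = (r/2) • x₀ := by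
          rw [add_smul, one_smul]; abel
        rw [this, norm_smul, hx₀, mul_one, Real.norm_eq_abs, abs_of_pos (by linarith)]
      calc dist y x₀ ≤ dist y x₁ + dist x₁ x₀ := dist_triangle _ _ _
        _ < r/4 + r/2 := by rw [hd]; linarith
        _ ≤ r := by linarith
    have hlb : ∀ y ∈ ball x₁ (r/4), (r/4) ^ α ≤ f y := by
      intro y hy
      rw [mem_ball, dist_eq_norm] at hy
      have h1 : 1 + r/4 ≤ ‖y‖ := by
        have h2 := (abs_le.1 (abs_norm_sub_norm_le y x₁)).1
        rw [hx₁norm] at h2; linarith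
      have h2 : r/4 ≤ |1 - ‖y‖| := by
        rw [abs_sub_comm, abs_of_nonneg (by linarith)]; linarith
      exact Real.rpow_le_rpow (by positivity) h2 hα
    have hintc : IntegrableOn (fun _ : E => (r/4)^α) (ball x₁ (r/4)) volume :=
      integrableOn_const measure_ball_lt_top.ne
    calc κ * (1/4) ^ ((n:ℝ) + α) * r ^ ((n:ℝ) + α)
        = κ * (r/4) ^ ((n:ℝ) + α) := by
          rw [mul_assoc, ← Real.mul_rpow (by norm_num) hr.le]
          ring_nf
      _ = (r/4) ^ n * κ * (r/4) ^ α := by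
          rw [Real.rpow_add (by positivity), Real.rpow_natCast]; ring
      _ = ∫ _ in ball x₁ (r/4), (r/4)^α := by
          rw [setIntegral_const, smul_eq_mul, measureReal_def, hvol x₁ (r/4) (by positivity)]
      _ ≤ ∫ y in ball x₁ (r/4), f y :=
          setIntegral_mono_on hintc (hint.mono_set hsub) measurableSet_ball hlb
      _ ≤ ∫ y in ball x₀ r, f y := by
          apply setIntegral_mono_set hint (Filter.Eventually.of_forall hfnonneg) (HasSubset.Subset.eventuallyLE hsub)
  · -- upper bound
    calc (∫ y in ball x₀ r, f y) ≤ ∫ _ in ball x₀ r, r ^ α :=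
          setIntegral_mono_on hint (integrableOn_const measure_ball_lt_top.ne)
            measurableSet_ball hub
      _ = r ^ n * κ * r ^ α := by
          rw [setIntegral_const, smul_eq_mul, measureReal_def, hvol x₀ r hr.le]
      _ = κ * r ^ ((n:ℝ) + α) := by
          rw [Real.rpow_add hr, Real.rpow_natCast]; ring
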